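/- Every unital quantum channel on a qubit (a completely positive trace-preserving map on 2×2 complex matrices with N(𝟙) = 𝟙) is a mixed-unitary channel, i.e., can be written as ρ ↦ Σ_m p(m) U_m ρ U_m† for a probability distribution p and unitary matrices U_m. -/

import Mathlib

open Matrix Kronecker Finset
open scoped ComplexConjugate Classical ComplexOrder

noncomputable section

/-- Density matrix (outer product) of a vector. -/
def dmv {n : Type*} (v : n → ℂ) : Matrix n n ℂ :=
  Matrix.of fun i j => v i * conj (v j)

/-- Outer product `|u⟩⟨v|`. -/
def outer {n : Type*} (u v : n → ℂ) : Matrix n n ℂ :=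
  Matrix.of fun i j => u i * conj (v j)

/-- Largest eigenvalue of a (Hermitian) matrix. -/
def maxEig {n : Type*} [Fintype n] [DecidableEq n] (A : Matrix n n ℂ) : ℝ :=
  if h : A.IsHermitian then ⨆ i, h.eigenvalues i else 0

/-- Sum of the `k` largest eigenvalues of a Hermitian matrix. -/
def topSum {n : Type*} [Fintype n] [DecidableEq n] (A : Matrix n n ℂ) (k : ℕ) : ℝ :=
  if h : A.IsHermitian then
    sSup {x : ℝ | ∃ s : Finset n, s.card = k ∧ x = ∑ i ∈ s, h.eigenvalues i}
  else 0

/-- Majorization of Hermitian operators: `A ≺ B` (possibly on different spaces):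
every partial sum of the `k` largest eigenvalues of `A` is at most that of `B`,
and the traces agree. -/
def Maj {m n : Type*} [Fintype m] [DecidableEq m] [Fintype n] [DecidableEq n]
    (A : Matrix m m ℂ) (B : Matrix n n ℂ) : Prop :=
  (∀ k : ℕ, topSum A k ≤ topSum B k) ∧ A.trace = B.trace

/-- Total matrix square root: the positive square root for PSD matrices, `0` otherwise. -/
def msqrt {n : Type*} [Fintype n] [DecidableEq n] (A : Matrix n n ℂ) : Matrix n n ℂ :=
  if h : A.PosSemidef then
    (h.1.eigenvectorUnitary : Matrix n n ℂ) * diagonal (fun i => ((Real.sqrt (h.1.eigenvalues i) : ℝ) : ℂ)) *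
      (star h.1.eigenvectorUnitary : Matrix n n ℂ)
  else 0

/-- Trace norm (sum of singular values). -/
def traceNorm {n : Type*} [Fintype n] [DecidableEq n] (A : Matrix n n ℂ) : ℝ :=
  ((msqrt (Aᴴ * A)).trace).re

/-- Fidelity `F(ρ,σ) = ‖√ρ √σ‖₁`. -/
def fid {n : Type*} [Fintype n] [DecidableEq n] (ρ σ : Matrix n n ℂ) : ℝ :=
  traceNorm (msqrt ρ * msqrt σ)

/-- Purified distance `P(ρ,σ) = √(1 − F²(ρ,σ))`. -/
def pd {n : Type*} [Fintype n] [DecidableEq n] (ρ σ : Matrix n n ℂ) : ℝ :=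
  Real.sqrt (1 - fid ρ σ ^ 2)

/-- Choi matrix of a map on matrices. -/
def choi {m n : Type*} [Fintype m] [DecidableEq m]
    (N : Matrix m m ℂ → Matrix n n ℂ) : Matrix (m × n) (m × n) ℂ :=
  Matrix.of fun p q => N (Matrix.single p.1 q.1 1) p.2 q.2

/-- A map is mixed-unitary if it is a convex combination of unitary conjugations. -/
def IsMixedUnitary {n : Type*} [Fintype n] [DecidableEq n]
    (N : Matrix n n ℂ → Matrix n n ℂ) : Prop :=
  ∃ (m : ℕ) (p : Fin m → ℝ) (U : Fin m → Matrix n n ℂ),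
    (∀ i, 0 ≤ p i) ∧ (∑ i, p i = 1) ∧ (∀ i, U i ∈ Matrix.unitaryGroup n ℂ) ∧
    ∀ ρ, N ρ = ∑ i, (p i : ℂ) • (U i * ρ * (U i)ᴴ)

/-- `id_R ⊗ M` acting blockwise on a matrix on `R × S`. -/
def idTensor {R S T : Type*} (M : Matrix S S ℂ →ₗ[ℂ] Matrix T T ℂ)
    (ρ : Matrix (R × S) (R × S) ℂ) : Matrix (R × T) (R × T) ℂ :=
  Matrix.of fun p q => M (Matrix.of fun s s' => ρ (p.1, s) (q.1, s')) p.2 q.2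

end

/-!
Let `M` be the magic basis and `J` the Choi matrix of the channel. Trace preservation and
unitality say that both partial traces of `J` are the identity, which is exactly what makes
`K = Mᴴ J M` symmetric; being Hermitian, `K` is then real, and complete positivity makes it
positive semidefinite. So `K` has a real orthonormal eigenbasis, and `M` maps a real unit vector
`(a, b, c, d)` to the vectorisation of the unit quaternion `a + i (b σx + c σy + d σz) ∈ SU(2)`.
As `M Mᴴ = 2`, we get `4 J = M K Mᴴ`, so the eigendecomposition of `K` exhibits the channel as a
mixture of these unitaries, with weights the eigenvalues of `K` divided by `tr K = 4`.
-/

section Choi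

variable {n : Type*} [Fintype n] [DecidableEq n]

lemma apply_eq_sum_smul_apply_single (N : Matrix n n ℂ →ₗ[ℂ] Matrix n n ℂ) (ρ : Matrix n n ℂ) :
    N ρ = ∑ i, ∑ j, ρ i j • N (Matrix.single i j 1) := by
  conv_lhs => rw [ρ.matrix_eq_sum_single]
  simp only [map_sum, ← map_smul, smul_single, smul_eq_mul, mul_one]

lemma apply_apply_eq_sum_mul_choi (N : Matrix n n ℂ →ₗ[ℂ] Matrix n n ℂ) (ρ : Matrix n n ℂ)
    (k l : n) :
    N ρ k l = ∑ i, ∑ j, ρ i j * choi (fun ρ => N ρ) (i, k) (j, l) := by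
  rw [apply_eq_sum_smul_apply_single N]
  simp [choi, Matrix.sum_apply]

lemma sum_choi_apply_of_trace_preserving (N : Matrix n n ℂ →ₗ[ℂ] Matrix n n ℂ)
    (hTP : ∀ ρ, (N ρ).trace = ρ.trace) (i j : n) :
    ∑ k, choi (fun ρ => N ρ) (i, k) (j, k) = (1 : Matrix n n ℂ) i j := by
  calc ∑ k, choi (fun ρ => N ρ) (i, k) (j, k) = (N (Matrix.single i j 1)).trace := rfl
    _ = (1 : Matrix n n ℂ) i j := by
      rw [hTP]
      obtain rfl | hij := eq_or_ne i j
      · simp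
      · simp [trace_single_eq_of_ne _ _ _ hij, hij]

lemma sum_choi_apply_of_unital (N : Matrix n n ℂ →ₗ[ℂ] Matrix n n ℂ) (hunital : N 1 = 1)
    (k l : n) :
    ∑ i, choi (fun ρ => N ρ) (i, k) (i, l) = (1 : Matrix n n ℂ) k l := by
  rw [← hunital, ← sum_single_one, map_sum]
  simp [choi, Matrix.sum_apply]

lemma trace_choi_of_trace_preserving (N : Matrix n n ℂ →ₗ[ℂ] Matrix n n ℂ)
    (hTP : ∀ ρ, (N ρ).trace = ρ.trace) :
    (choi fun ρ => N ρ).trace = Fintype.card n := by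
  simp [trace, Fintype.sum_prod_type, sum_choi_apply_of_trace_preserving N hTP]

lemma apply_eq_sum_smul_conj_of_choi_eq {ι : Type*} [Fintype ι] [DecidableEq ι]
    (N : Matrix n n ℂ →ₗ[ℂ] Matrix n n ℂ) (c : ι → ℂ) (U : ι → Matrix n n ℂ)
    (h : choi (fun ρ => N ρ) =
      of (fun p m => vec (U m) p) * diagonal c * (of fun p m => vec (U m) p)ᴴ)
    (ρ : Matrix n n ℂ) :
    N ρ = ∑ m, c m • (U m * ρ * (U m)ᴴ) := by
  ext k l
  rw [apply_apply_eq_sum_mul_choi, h]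
  simp only [mul_apply, Matrix.sum_apply, Matrix.smul_apply, conjTranspose_apply, diagonal_apply,
    of_apply, vec, mul_ite, mul_zero, Finset.sum_ite_eq', mem_univ, if_true, smul_eq_mul,
    Finset.mul_sum, Finset.sum_mul]
  conv_lhs => enter [2, i]; rw [Finset.sum_comm]
  rw [Finset.sum_comm]
  refine sum_congr rfl fun m _ => ?_
  rw [Finset.sum_comm]
  exact sum_congr rfl fun _ _ => sum_congr rfl fun _ _ => by ring

end Choi

section RealMatrix

variable {n : Type*}

lemma Matrix.IsHermitian.map_re_map_ofReal {K : Matrix n n ℂ} (hH : K.IsHermitian)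
    (hS : K.IsSymm) :
    (K.map Complex.re).map Complex.ofReal = K := by
  ext a b
  exact Complex.conj_eq_iff_re.mp ((hH.apply b a).trans (hS.apply a b))

lemma Matrix.PosSemidef.of_map_ofReal [Fintype n] {A : Matrix n n ℝ}
    (hA : (A.map Complex.ofReal).PosSemidef) :
    A.PosSemidef := by
  refine .of_dotProduct_mulVec_nonneg ?_ fun x => ?_
  · ext a b
    simpa using congr_fun₂ hA.1 a b
  · have key : star (Complex.ofReal ∘ x) ⬝ᵥ A.map Complex.ofReal *ᵥ (Complex.ofReal ∘ x) =
        ((star x ⬝ᵥ A *ᵥ x : ℝ) : ℂ) := by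
      simp [dotProduct, mulVec]
    exact_mod_cast key ▸ hA.dotProduct_mulVec_nonneg _

lemma Matrix.PosSemidef.exists_orthogonal_diagonal [Fintype n] [DecidableEq n] {A : Matrix n n ℝ}
    (hA : A.PosSemidef) :
    ∃ (V : Matrix n n ℝ) (d : n → ℝ), Vᵀ * V = 1 ∧ (∀ i, 0 ≤ d i) ∧ ∑ i, d i = A.trace ∧
      A = V * diagonal d * Vᵀ := by
  refine ⟨hA.1.eigenvectorUnitary, hA.1.eigenvalues, ?_, hA.eigenvalues_nonneg, ?_, ?_⟩
  · exact mem_unitaryGroup_iff'.mp hA.1.eigenvectorUnitary.2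
  · simpa using hA.1.trace_eq_sum_eigenvalues.symm
  · simpa [star_eq_conjTranspose, conjTranspose_eq_transpose_of_trivial] using
      hA.1.spectral_theorem

lemma map_ofReal_mul_diagonal_mul_transpose [Fintype n] [DecidableEq n] (V : Matrix n n ℝ)
    (d : n → ℝ) :
    (V * diagonal d * Vᵀ).map Complex.ofReal =
      V.map Complex.ofReal * diagonal (fun i => (d i : ℂ)) * (V.map Complex.ofReal)ᴴ := by
  ext a b
  simp [mul_apply, diagonal_apply]

end RealMatrix

/-- Column `j` is `vec` of the `j`-th element of `1, iσx, iσy, iσz`. -/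
def magicBasis : Matrix (Fin 2 × Fin 2) (Fin 4) ℂ :=
  open Complex in
  of fun p j => ![![![1, 0, 0, I], ![0, I, -1, 0]], ![![0, I, 1, 0], ![1, 0, 0, -I]]] p.1 p.2 j

/-- `x 0 + i (x 1 σx + x 2 σy + x 3 σz)`. -/
def quaternionMatrix (x : Fin 4 → ℝ) : Matrix (Fin 2) (Fin 2) ℂ :=
  open Complex in
  !![x 0 + x 3 * I, x 2 + x 1 * I; -x 2 + x 1 * I, x 0 - x 3 * I]

lemma quaternionMatrix_mem_unitaryGroup {x : Fin 4 → ℝ} (hx : ∑ i, x i ^ 2 = 1) :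
    quaternionMatrix x ∈ unitaryGroup (Fin 2) ℂ := by
  rw [mem_unitaryGroup_iff']
  have hx' : ((x 0 : ℂ) ^ 2 + x 1 ^ 2 + x 2 ^ 2 + x 3 ^ 2) = 1 := by
    simpa [Fin.sum_univ_four] using congrArg (fun r : ℝ => (r : ℂ)) hx
  ext a b
  fin_cases a <;> fin_cases b <;>
    simp [quaternionMatrix, mul_apply, Fin.sum_univ_two, Complex.conj_ofReal] <;>
    ring_nf <;> simp only [Complex.I_sq] <;> linear_combination hx'

lemma magicBasis_mul_map_ofReal {ι : Type*} (V : Matrix (Fin 4) ι ℝ) :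
    magicBasis * V.map Complex.ofReal = of fun p m => vec (quaternionMatrix fun i => V i m) p := by
  ext ⟨i, k⟩ m
  rw [mul_apply, Fin.sum_univ_four]
  fin_cases i <;> fin_cases k <;> simp [magicBasis, quaternionMatrix, vec] <;> ring

lemma magicBasis_mul_conjTranspose : magicBasis * magicBasisᴴ = (2 : ℂ) • 1 := by
  ext ⟨i, k⟩ ⟨j, l⟩
  fin_cases i <;> fin_cases k <;> fin_cases j <;> fin_cases l <;>
    simp [magicBasis, mul_apply, Fin.sum_univ_four, one_apply] <;> ring

lemma magicBasis_mul_conjTranspose_magicBasis_mul_mul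
    (J : Matrix (Fin 2 × Fin 2) (Fin 2 × Fin 2) ℂ) :
    magicBasis * (magicBasisᴴ * J * magicBasis) * magicBasisᴴ = (4 : ℂ) • J := by
  rw [← Matrix.mul_assoc, ← Matrix.mul_assoc, Matrix.mul_assoc, magicBasis_mul_conjTranspose]
  simp only [Matrix.smul_mul, Matrix.one_mul, Matrix.mul_smul, Matrix.mul_one, smul_smul]
  norm_num

lemma trace_conjTranspose_magicBasis_mul_mul (J : Matrix (Fin 2 × Fin 2) (Fin 2 × Fin 2) ℂ) :
    (magicBasisᴴ * J * magicBasis).trace = 2 * J.trace := by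
  rw [trace_mul_cycle, magicBasis_mul_conjTranspose, Matrix.smul_mul, Matrix.one_mul, trace_smul,
    smul_eq_mul]

lemma isSymm_conjTranspose_magicBasis_mul_mul (J : Matrix (Fin 2 × Fin 2) (Fin 2 × Fin 2) ℂ)
    (hout : ∀ i j, ∑ k, J (i, k) (j, k) = (1 : Matrix (Fin 2) (Fin 2) ℂ) i j)
    (hin : ∀ k l, ∑ i, J (i, k) (i, l) = (1 : Matrix (Fin 2) (Fin 2) ℂ) k l) :
    (magicBasisᴴ * J * magicBasis).IsSymm := by
  have o01 := hout 0 1; have o10 := hout 1 0; have o00 := hout 0 0; have o11 := hout 1 1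
  have i01 := hin 0 1; have i10 := hin 1 0; have i00 := hin 0 0
  simp only [Fin.sum_univ_two, one_apply_eq, one_apply_ne zero_ne_one,
    one_apply_ne one_ne_zero] at o01 o10 o00 o11 i01 i10 i00
  rw [← eq_neg_iff_add_eq_zero] at o01 o10 i01 i10
  rw [← eq_sub_iff_add_eq'] at o00 o11 i00
  ext a b
  fin_cases a <;> fin_cases b <;>
    simp [magicBasis, mul_apply, Fintype.sum_prod_type, Fin.sum_univ_two, o01, o10, i01, i10,
      o00, o11, i00] <;> ring

theorem exists_choi_eq_magicBasis_mul
    (N : Matrix (Fin 2) (Fin 2) ℂ →ₗ[ℂ] Matrix (Fin 2) (Fin 2) ℂ)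
    (hCP : (choi fun ρ => N ρ).PosSemidef) (hTP : ∀ ρ, (N ρ).trace = ρ.trace)
    (hunital : N 1 = 1) :
    ∃ (V : Matrix (Fin 4) (Fin 4) ℝ) (p : Fin 4 → ℝ),
      (∀ m, ∑ i, V i m ^ 2 = 1) ∧ (∀ m, 0 ≤ p m) ∧ ∑ m, p m = 1 ∧
      choi (fun ρ => N ρ) = (magicBasis * V.map Complex.ofReal) *
        diagonal (fun m => (p m : ℂ)) * (magicBasis * V.map Complex.ofReal)ᴴ := by
  set J := choi fun ρ => N ρ
  set K := magicBasisᴴ * J * magicBasis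
  have hreal : (K.map Complex.re).map Complex.ofReal = K :=
    (isHermitian_conjTranspose_mul_mul _ hCP.1).map_re_map_ofReal
      (isSymm_conjTranspose_magicBasis_mul_mul J (sum_choi_apply_of_trace_preserving N hTP)
        (sum_choi_apply_of_unital N hunital))
  have hpsd : (K.map Complex.re).PosSemidef :=
    .of_map_ofReal (by rw [hreal]; exact hCP.conjTranspose_mul_mul_same _)
  obtain ⟨V, d, hV, hd, htr, hK⟩ := hpsd.exists_orthogonal_diagonal
  have htrK : K.trace = 4 := by
    rw [trace_conjTranspose_magicBasis_mul_mul, trace_choi_of_trace_preserving N hTP]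
    norm_num
  refine ⟨V, fun m => d m / 4, fun m => ?_, fun m => div_nonneg (hd m) zero_le_four, ?_, ?_⟩
  · simpa [mul_apply, sq] using congr_fun₂ hV m m
  · have hre : (K.map Complex.re).trace = K.trace.re := by simp [trace, Complex.re_sum]
    rw [← Finset.sum_div, htr, hre, htrK]
    norm_num
  · have hdiag : diagonal (fun m => ((d m / 4 : ℝ) : ℂ)) =
        (4 : ℂ)⁻¹ • diagonal (fun m => (d m : ℂ)) := by
      ext i j
      by_cases h : i = j <;> simp [h, div_eq_inv_mul]
    calc J = (4 : ℂ)⁻¹ • (magicBasis * K * magicBasisᴴ) := by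
          rw [magicBasis_mul_conjTranspose_magicBasis_mul_mul, smul_smul]
          norm_num
      _ = (4 : ℂ)⁻¹ • (magicBasis * (V.map Complex.ofReal * diagonal (fun m => (d m : ℂ)) *
            (V.map Complex.ofReal)ᴴ) * magicBasisᴴ) := by
          rw [← hreal, hK, map_ofReal_mul_diagonal_mul_transpose]
      _ = _ := by
          rw [hdiag, conjTranspose_mul]
          simp only [Matrix.mul_smul, Matrix.smul_mul, Matrix.mul_assoc]

/-- every unital qubit channel is mixed unitary. -/
theorem stmt6 (N : Matrix (Fin 2) (Fin 2) ℂ →ₗ[ℂ] Matrix (Fin 2) (Fin 2) ℂ)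
    (hCP : (choi fun ρ => N ρ).PosSemidef)
    (hTP : ∀ ρ, (N ρ).trace = ρ.trace)
    (hunital : N 1 = 1) :
    IsMixedUnitary fun ρ => N ρ := by
  obtain ⟨V, p, hV, hp, hsum, hchoi⟩ := exists_choi_eq_magicBasis_mul N hCP hTP hunital
  rw [magicBasis_mul_map_ofReal] at hchoi
  exact ⟨4, p, fun m => quaternionMatrix fun i => V i m, hp, hsum,
    fun m => quaternionMatrix_mem_unitaryGroup (hV m),
    apply_eq_sum_smul_conj_of_choi_eq N _ _ hchoi⟩
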